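/- arXiv:2401.15454 — 4 statements merged into one kernel-verified Lean document; each statement's English description precedes it below -/
import Mathlib

section
/- For the torus with radii R > r > 0 and any u, v, θ, φ ∈ ℝ, the four points X = p(u, θ), Y = p(v, φ), Z₁ = p(v, θ), Z₂ = p(u, φ) are coplanar; that is, the three vectors Z₁ − X, Z₂ − X and Y − X are linearly dependent (the 3×3 determinant whose rows are these vectors vanishes). -/
open Real

/-- The torus of radii `(R, r)` parametrized by longitude `u` and latitude `θ`. -/
noncomputable def torusPoint (R r u θ : ℝ) : Fin 3 → ℝ :=
  ![(R - r * Real.cos θ) * Real.cos u, (R - r * Real.cos θ) * Real.sin u, r * Real.sin θ]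

/-!
The chord from `p(u, θ)` to `p(v, θ)` is `(R - r cos θ) • (cos v - cos u, sin v - sin u, 0)`, so
the chords `XZ₁` and `Z₂Y` along the two parallels are parallel. Hence `Y - X = (Y - Z₂) + (Z₂ - X)`
is a multiple of `Z₁ - X` plus `Z₂ - X`, and the determinant vanishes.
-/

theorem Matrix.det_of_smul_self_smul_add {R : Type*} [CommRing R] (w d : Fin 3 → R) (a b : R) :
    Matrix.det (Matrix.of ![a • w, d, b • w + d]) = 0 := by
  simp only [Matrix.det_fin_three, Matrix.of_apply, Matrix.cons_val, Pi.add_apply,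
    Pi.smul_apply, smul_eq_mul]
  ring

theorem torusPoint_sub_torusPoint_same_latitude (R r u v θ : ℝ) :
    torusPoint R r v θ - torusPoint R r u θ =
      (R - r * cos θ) • ![cos v - cos u, sin v - sin u, 0] := by
  ext i
  fin_cases i <;>
    simp only [torusPoint, Pi.sub_apply, Pi.smul_apply, smul_eq_mul, Fin.zero_eta, Fin.mk_one,
      Fin.reduceFinMk, Matrix.cons_val] <;>
    ring

theorem torus_four_points_coplanar_general (R r : ℝ)
    (u v θ φ : ℝ) :
    Matrix.det (Matrix.of
      ![torusPoint R r v θ - torusPoint R r u θ,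
        torusPoint R r u φ - torusPoint R r u θ,
        torusPoint R r v φ - torusPoint R r u θ]) = 0 := by
  rw [← sub_add_sub_cancel (torusPoint R r v φ) (torusPoint R r u φ),
    torusPoint_sub_torusPoint_same_latitude R r u v θ,
    torusPoint_sub_torusPoint_same_latitude R r u v φ]
  exact Matrix.det_of_smul_self_smul_add _ _ _ _

/-- For the torus with radii `R > r > 0` and any `u, v, θ, φ ∈ ℝ`, the four
points `X = p(u, θ)`, `Y = p(v, φ)`, `Z₁ = p(v, θ)`, `Z₂ = p(u, φ)` are coplanar: the 3×3
determinant whose rows are `Z₁ − X`, `Z₂ − X`, `Y − X` vanishes. -/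
theorem torus_four_points_coplanar (R r : ℝ) (hRr : R > r) (hr : r > 0)
    (u v θ φ : ℝ) :
    Matrix.det (Matrix.of
      ![torusPoint R r v θ - torusPoint R r u θ,
        torusPoint R r u φ - torusPoint R r u θ,
        torusPoint R r v φ - torusPoint R r u θ]) = 0 :=
  torus_four_points_coplanar_general R r u v θ φ
end

section
/- For the torus with radii R > r > 0 and all u, v, θ, φ ∈ [0, 2π], the squared Euclidean distance between X = p(u, θ) and Y = p(v, φ) is bounded by the squared pseudo-distance: a² + b² + c² − 2ab cos(u − v) ≤ r² δ(θ, φ)² + a b δ(u, v)², where a = R − r cos θ, b = R − r cos φ, c = r sin θ − r sin φ, and δ(x, y) = min(|x − y|, 2π − |x − y|). -/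
/-!
Writing `a - b = r cos φ - r cos θ`, the squared distance splits as
`(a - b)² + c² + 2ab (1 - cos (u - v)) = r² (2 - 2 cos (θ - φ)) + ab (2 - 2 cos (u - v))`.
Since `cos δ(x, y) = cos (x - y)` and `2 - 2 cos t ≤ t²`, each chord term is bounded by the
corresponding squared angular distance, and `ab > 0` because `R > r > 0`.
-/

open Real

/-- Minimal angular distance between two angles in `[0, 2π]`. -/
noncomputable def angDist (x y : ℝ) : ℝ := min |x - y| (2 * Real.pi - |x - y|)

lemma two_sub_two_cos_le_sq (t : ℝ) : 2 - 2 * cos t ≤ t ^ 2 := by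
  linarith [one_sub_sq_div_two_le_cos (x := t)]

lemma cos_angDist (x y : ℝ) : cos (angDist x y) = cos (x - y) := by
  rcases le_total |x - y| (2 * π - |x - y|) with h | h
  · rw [angDist, min_eq_left h, cos_abs]
  · rw [angDist, min_eq_right h, cos_two_pi_sub, cos_abs]

lemma two_sub_two_cos_le_angDist_sq (x y : ℝ) : 2 - 2 * cos (x - y) ≤ angDist x y ^ 2 := by
  simpa only [cos_angDist] using two_sub_two_cos_le_sq (angDist x y)

lemma sub_mul_cos_pos {R r : ℝ} (h : |r| < R) (θ : ℝ) : 0 < R - r * cos θ := by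
  have : r * cos θ ≤ |r| := by
    calc r * cos θ ≤ |r * cos θ| := le_abs_self _
      _ = |r| * |cos θ| := abs_mul _ _
      _ ≤ |r| := mul_le_of_le_one_right (abs_nonneg r) (abs_cos_le_one θ)
  linarith

lemma sq_chord_eq (r θ φ : ℝ) :
    (r * cos θ - r * cos φ) ^ 2 + (r * sin θ - r * sin φ) ^ 2 = r ^ 2 * (2 - 2 * cos (θ - φ)) := by
  rw [cos_sub]
  linear_combination r ^ 2 * (sin_sq_add_cos_sq θ + sin_sq_add_cos_sq φ)

lemma torus_sq_dist_eq (R r u v θ φ : ℝ) :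
    (R - r * cos θ) ^ 2 + (R - r * cos φ) ^ 2 + (r * sin θ - r * sin φ) ^ 2 -
        2 * (R - r * cos θ) * (R - r * cos φ) * cos (u - v) =
      r ^ 2 * (2 - 2 * cos (θ - φ)) +
        (R - r * cos θ) * (R - r * cos φ) * (2 - 2 * cos (u - v)) := by
  rw [← sq_chord_eq]
  ring

theorem torus_dist_le_pseudoDist_general (R r : ℝ) (hRr : R > r) (hr : r > 0)
    (u v θ φ : ℝ) :
    (R - r * Real.cos θ) ^ 2 + (R - r * Real.cos φ) ^ 2 +
        (r * Real.sin θ - r * Real.sin φ) ^ 2 -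
        2 * (R - r * Real.cos θ) * (R - r * Real.cos φ) * Real.cos (u - v) ≤
      r ^ 2 * angDist θ φ ^ 2 +
        (R - r * Real.cos θ) * (R - r * Real.cos φ) * angDist u v ^ 2 := by
  have hR : |r| < R := by rwa [abs_of_pos hr]
  have hab : 0 ≤ (R - r * cos θ) * (R - r * cos φ) :=
    (mul_pos (sub_mul_cos_pos hR θ) (sub_mul_cos_pos hR φ)).le
  rw [torus_sq_dist_eq]
  gcongr
  · exact two_sub_two_cos_le_angDist_sq θ φ
  · exact two_sub_two_cos_le_angDist_sq u v

/-- For the torus with radii `R > r > 0` and all `u, v, θ, φ ∈ [0, 2π]`,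
the squared Euclidean distance between `X = p(u, θ)` and `Y = p(v, φ)` is bounded by
the squared pseudo-distance:
`a² + b² + c² − 2ab cos(u − v) ≤ r² δ(θ, φ)² + a b δ(u, v)²`,
where `a = R − r cos θ`, `b = R − r cos φ`, `c = r sin θ − r sin φ`. -/
theorem torus_dist_le_pseudoDist (R r : ℝ) (hRr : R > r) (hr : r > 0)
    (u v θ φ : ℝ) (hu : u ∈ Set.Icc 0 (2 * Real.pi)) (hv : v ∈ Set.Icc 0 (2 * Real.pi))
    (hθ : θ ∈ Set.Icc 0 (2 * Real.pi)) (hφ : φ ∈ Set.Icc 0 (2 * Real.pi)) :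
    (R - r * Real.cos θ) ^ 2 + (R - r * Real.cos φ) ^ 2 +
        (r * Real.sin θ - r * Real.sin φ) ^ 2 -
        2 * (R - r * Real.cos θ) * (R - r * Real.cos φ) * Real.cos (u - v) ≤
      r ^ 2 * angDist θ φ ^ 2 +
        (R - r * Real.cos θ) * (R - r * Real.cos φ) * angDist u v ^ 2 :=
  torus_dist_le_pseudoDist_general R r hRr hr u v θ φ
end

section
/- For every real α with 0 < α < 2, the function (ξ, η, θ, φ) ↦ ((ξ + sin φ)² + (η − sin θ)² + (2 − cos θ − cos φ)²)^{−α/2} is Lebesgue integrable on [−π, π]⁴ (it is defined off the measure-zero set where the denominator vanishes). -/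
/-!
With `s = α / 2 < 1`, write `A = ξ + sin φ` and `B = η - sin θ`. Since `|A| |B| ≤ A² + B²`,
the integrand is at most `|A|^(-s) |B|^(-s)` wherever `A B ≠ 0`, which is almost everywhere.
The shear `(ξ, η, θ, φ) ↦ (A, B, θ, φ)` preserves Lebesgue measure, so this bound is integrable
on the box because `|u|^(-s) |v|^(-s)` is: `|u|^(-s)` is locally integrable on the line as `s < 1`.
-/

open Real MeasureTheory Set

theorem measurePreserving_add_shear {G X : Type*} [MeasurableSpace G] [AddGroup G]
    [MeasurableAdd₂ G] [MeasurableSpace X] {ν : Measure G} [SFinite ν] [ν.IsAddRightInvariant]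
    {μ : Measure X} [SFinite μ] {c : X → G} (hc : Measurable c) :
    MeasurePreserving (fun p : G × X => (p.1 + c p.2, p.2)) (ν.prod μ) (ν.prod μ) :=
  (Measure.measurePreserving_swap.comp <| (MeasurePreserving.id μ).skew_product
    (g := fun x t => t + c x) (by fun_prop)
    (ae_of_all _ fun x => map_add_right_eq_self ν (c x))).comp Measure.measurePreserving_swap

theorem measurePreserving_add_sin_sub_sin :
    MeasurePreserving (fun x : ℝ × ℝ × ℝ × ℝ => (x.1 + sin x.2.2.2, x.2.1 - sin x.2.2.1, x.2.2))
      volume volume := by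
  have inner := measurePreserving_add_shear (ν := volume) (μ := (volume : Measure (ℝ × ℝ)))
    (c := fun w => -sin w.1) (by fun_prop)
  have outer := measurePreserving_add_shear (ν := volume) (μ := (volume : Measure (ℝ × ℝ × ℝ)))
    (c := fun y => sin y.2.2) (by fun_prop)
  have h := ((MeasurePreserving.id volume).prod inner).comp outer
  simp only [Function.comp_def, Prod.map, id, ← sub_eq_add_neg] at h
  exact h

theorem MeasureTheory.IntegrableOn.mul_prod {α β L : Type*} [MeasurableSpace α]
    [MeasurableSpace β] [NormedRing L] {μ : Measure α} {ν : Measure β} [SFinite μ] [SFinite ν]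
    {f : α → L} {g : β → L} {s : Set α} {t : Set β} (hf : IntegrableOn f s μ)
    (hg : IntegrableOn g t ν) :
    IntegrableOn (fun z : α × β => f z.1 * g z.2) (s ×ˢ t) (μ.prod ν) := by
  rw [IntegrableOn, ← Measure.prod_restrict]
  exact Integrable.mul_prod hf hg

theorem locallyIntegrable_abs_rpow_neg {s : ℝ} (hs : s < 1) :
    LocallyIntegrable (fun x : ℝ => |x| ^ (-s)) := by
  refine locallyIntegrable_of_norm_le_rpow (C := 1) (α := s) (by simp) (by simpa using hs)
    (ae_of_all _ fun x => ?_) (continuous_abs.measurable.pow_const _).aestronglyMeasurable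
  rw [one_mul, norm_eq_abs, norm_eq_abs, abs_of_nonneg (by positivity)]

theorem integrableOn_abs_rpow_neg_mul_abs_rpow_neg {X : Type*} [MeasurableSpace X]
    {μ : Measure X} [SFinite μ] {s a b c d : ℝ} (hs : s < 1) {K : Set X} (hK : μ K ≠ ⊤) :
    IntegrableOn (fun y : ℝ × ℝ × X => |y.1| ^ (-s) * |y.2.1| ^ (-s))
      (Icc a b ×ˢ Icc c d ×ˢ K) (volume.prod (volume.prod μ)) := by
  have hf := locallyIntegrable_abs_rpow_neg hs
  have h := (hf.integrableOn_isCompact (isCompact_Icc (a := a) (b := b))).mul_prod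
    ((hf.integrableOn_isCompact (isCompact_Icc (a := c) (b := d))).mul_prod
      (integrableOn_const (C := (1 : ℝ)) hK))
  simp only [mul_one] at h
  exact h

theorem rpow_neg_sq_add_sq_add_sq_le {a b c s : ℝ} (ha : a ≠ 0) (hb : b ≠ 0) (hs : 0 ≤ s) :
    (a ^ 2 + b ^ 2 + c ^ 2) ^ (-s) ≤ |a| ^ (-s) * |b| ^ (-s) := by
  rw [← mul_rpow (abs_nonneg a) (abs_nonneg b)]
  refine rpow_le_rpow_of_nonpos (by positivity) ?_ (neg_nonpos.2 hs)
  nlinarith [sq_nonneg (|a| - |b|), sq_abs a, sq_abs b, sq_nonneg c]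

/-- for `0 < α < 2`, the function
`(ξ, η, θ, φ) ↦ ((ξ + sin φ)² + (η − sin θ)² + (2 − cos θ − cos φ)²)^{−α/2}`
is Lebesgue integrable on `[−π, π]⁴` (convergence of the tube energy with exponent
`α < 2` near an isolated self-contact point). -/
theorem integrable_inverse_dist_pow_perpendicular_cylinders
    (α : ℝ) (h0 : 0 < α) (h2 : α < 2) :
    IntegrableOn
      (fun x : ℝ × ℝ × ℝ × ℝ =>
        ((x.1 + Real.sin x.2.2.2) ^ 2 + (x.2.1 - Real.sin x.2.2.1) ^ 2 +
            (2 - Real.cos x.2.2.1 - Real.cos x.2.2.2) ^ 2) ^ (-(α / 2)))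
      (Set.Icc (-Real.pi) Real.pi ×ˢ Set.Icc (-Real.pi) Real.pi ×ˢ
        Set.Icc (-Real.pi) Real.pi ×ˢ Set.Icc (-Real.pi) Real.pi) := by
  set J := Icc (-π) π
  have hΨ := measurePreserving_add_sin_sub_sin
  have hG := integrableOn_abs_rpow_neg_mul_abs_rpow_neg (s := α / 2) (a := -π - 1) (b := π + 1)
    (c := -π - 1) (d := π + 1) (K := J ×ˢ J) (μ := volume) (by linarith)
    (isCompact_Icc.prod isCompact_Icc).measure_lt_top.ne
  have hGΨ := ((hΨ.restrict_preimage (by measurability)).integrable_comp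
    hG.aestronglyMeasurable).2 hG
  refine (IntegrableOn.mono_set hGΨ ?_).mono'
    (Measurable.pow_const (by fun_prop) _).aestronglyMeasurable ?_
  · rintro ⟨ξ, η, θ, φ⟩ ⟨⟨hξ₁, hξ₂⟩, ⟨hη₁, hη₂⟩, hθ, hφ⟩
    refine ⟨⟨?_, ?_⟩, ⟨?_, ?_⟩, hθ, hφ⟩ <;>
      linarith [neg_one_le_sin θ, sin_le_one θ, neg_one_le_sin φ, sin_le_one φ]
  have hne : ∀ᵐ y : ℝ × ℝ × ℝ × ℝ, y.1 ≠ 0 ∧ y.2.1 ≠ 0 :=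
    (Measure.quasiMeasurePreserving_fst.ae (Measure.ae_ne volume 0)).and
      (Measure.quasiMeasurePreserving_snd.ae
        (Measure.quasiMeasurePreserving_fst.ae (Measure.ae_ne volume 0)))
  filter_upwards [ae_restrict_of_ae (hΨ.quasiMeasurePreserving.ae hne)] with x ⟨hA, hB⟩
  rw [norm_of_nonneg (by positivity)]
  exact rpow_neg_sq_add_sq_add_sq_le hA hB (by positivity)
end

section
/- The pseudo-distance d* on the torus with radii R = 2, r = 1 violates the triangle inequality: for the points X = p(0, 0), Z = p(π/3, π/6), Y = p(π/2, π/2), one has d*(X, Y) > d*(X, Z) + d*(Z, Y); explicitly, √(3π²/4) > √(π²/36 + (2 − √3/2)·π²/9) + √(π²/9 + (2 − √3/2)·π²/18). -/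
open Real

/-- The pseudo-distance between the points of longitudes `u, θ` and latitudes `θ, φ` on
the boundary of the torus of radii `(R, r)`. -/
noncomputable def dstar (R r u θ v φ : ℝ) : ℝ :=
  Real.sqrt (r ^ 2 * angDist θ φ ^ 2 +
    (R - r * Real.cos θ) * (R - r * Real.cos φ) * angDist u v ^ 2)

lemma angDist_eq (x y : ℝ) (h : |x - y| ≤ Real.pi) : angDist x y = |x - y| := by
  unfold angDist
  exact min_eq_left (by linarith)

lemma key_ineq :
    Real.sqrt (3 * Real.pi ^ 2 / 4) >
        Real.sqrt (Real.pi ^ 2 / 36 + (2 - Real.sqrt 3 / 2) * Real.pi ^ 2 / 9) +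
          Real.sqrt (Real.pi ^ 2 / 9 + (2 - Real.sqrt 3 / 2) * Real.pi ^ 2 / 18) := by
  have hs3 : Real.sqrt 3 ^ 2 = 3 := Real.sq_sqrt (by norm_num)
  have hs3lt : Real.sqrt 3 < 2 := by
    nlinarith [Real.sqrt_nonneg 3, hs3]
  have hpi := Real.pi_pos
  have hpi2 : 0 < Real.pi ^ 2 := by positivity
  set A := Real.pi ^ 2 / 36 + (2 - Real.sqrt 3 / 2) * Real.pi ^ 2 / 9 with hA
  set B := Real.pi ^ 2 / 9 + (2 - Real.sqrt 3 / 2) * Real.pi ^ 2 / 18 with hB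
  have hApos : 0 ≤ A := by rw [hA]; nlinarith
  have hBpos : 0 ≤ B := by rw [hB]; nlinarith
  have ha := Real.sq_sqrt hApos
  have hb := Real.sq_sqrt hBpos
  have han := Real.sqrt_nonneg A
  have hbn := Real.sqrt_nonneg B
  clear_value A B
  rw [gt_iff_lt, Real.lt_sqrt (by positivity)]
  have hab : Real.sqrt A * Real.sqrt B ≤ (A + B) / 2 := by
    nlinarith [sq_nonneg (Real.sqrt A - Real.sqrt B)]
  have h2 : 2 * (A + B) < 3 * Real.pi ^ 2 / 4 := by
    have h7 : 7 < 6 * Real.sqrt 3 := by nlinarith [Real.sqrt_nonneg 3]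
    nlinarith
  nlinarith

/-- the pseudo-distance `d*` on the torus with `R = 2`, `r = 1` violates
the triangle inequality for `X = p(0, 0)`, `Z = p(π/3, π/6)`, `Y = p(π/2, π/2)`:
`d*(X, Y) > d*(X, Z) + d*(Z, Y)`; explicitly,
`√(3π²/4) > √(π²/36 + (2 − √3/2)π²/9) + √(π²/9 + (2 − √3/2)π²/18)`. -/
theorem dstar_not_triangle :
    dstar 2 1 0 0 (Real.pi / 2) (Real.pi / 2) >
        dstar 2 1 0 0 (Real.pi / 3) (Real.pi / 6) +
          dstar 2 1 (Real.pi / 3) (Real.pi / 6) (Real.pi / 2) (Real.pi / 2) ∧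
      Real.sqrt (3 * Real.pi ^ 2 / 4) >
        Real.sqrt (Real.pi ^ 2 / 36 + (2 - Real.sqrt 3 / 2) * Real.pi ^ 2 / 9) +
          Real.sqrt (Real.pi ^ 2 / 9 + (2 - Real.sqrt 3 / 2) * Real.pi ^ 2 / 18) := by
  have hpi := Real.pi_pos
  have e1 : angDist 0 (Real.pi / 2) = Real.pi / 2 := by
    rw [angDist_eq _ _ (by rw [abs_sub_comm, sub_zero, abs_of_nonneg (by positivity)]; linarith)]
    rw [abs_sub_comm, sub_zero, abs_of_nonneg (by positivity)]
  have e2 : angDist 0 (Real.pi / 6) = Real.pi / 6 := by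
    rw [angDist_eq _ _ (by rw [abs_sub_comm, sub_zero, abs_of_nonneg (by positivity)]; linarith)]
    rw [abs_sub_comm, sub_zero, abs_of_nonneg (by positivity)]
  have e3 : angDist 0 (Real.pi / 3) = Real.pi / 3 := by
    rw [angDist_eq _ _ (by rw [abs_sub_comm, sub_zero, abs_of_nonneg (by positivity)]; linarith)]
    rw [abs_sub_comm, sub_zero, abs_of_nonneg (by positivity)]
  have e4 : angDist (Real.pi / 6) (Real.pi / 2) = Real.pi / 3 := by
    rw [angDist_eq _ _ (by rw [abs_sub_comm, abs_of_nonneg (by linarith)]; linarith)]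
    rw [abs_sub_comm, abs_of_nonneg (by linarith)]; ring
  have e5 : angDist (Real.pi / 3) (Real.pi / 2) = Real.pi / 6 := by
    rw [angDist_eq _ _ (by rw [abs_sub_comm, abs_of_nonneg (by linarith)]; linarith)]
    rw [abs_sub_comm, abs_of_nonneg (by linarith)]; ring
  have d1 : dstar 2 1 0 0 (Real.pi / 2) (Real.pi / 2) = Real.sqrt (3 * Real.pi ^ 2 / 4) := by
    unfold dstar
    rw [e1, Real.cos_zero, Real.cos_pi_div_two]
    ring_nf
  have d2 : dstar 2 1 0 0 (Real.pi / 3) (Real.pi / 6) =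
      Real.sqrt (Real.pi ^ 2 / 36 + (2 - Real.sqrt 3 / 2) * Real.pi ^ 2 / 9) := by
    unfold dstar
    rw [e2, e3, Real.cos_zero, Real.cos_pi_div_six]
    ring_nf
  have d3 : dstar 2 1 (Real.pi / 3) (Real.pi / 6) (Real.pi / 2) (Real.pi / 2) =
      Real.sqrt (Real.pi ^ 2 / 9 + (2 - Real.sqrt 3 / 2) * Real.pi ^ 2 / 18) := by
    unfold dstar
    rw [e4, e5, Real.cos_pi_div_two, Real.cos_pi_div_six]
    ring_nf
  refine ⟨?_, key_ineq⟩
  rw [d1, d2, d3]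
  exact key_ineq
end
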